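/- Let Γ be a set, F : Γ → Option Γ a partial map, and T the induced bounded linear operator on ℓ¹(Γ). Then the range of T equals the subspace {y ∈ ℓ¹(Γ) : y δ = 0 for every δ ∈ Γ that is not of the form F γ = some δ for some γ ∈ Γ}; in particular T has closed range. -/

import Mathlib

/-- The coordinate vector `e_γ` in `ℓ¹(Γ)`. -/
noncomputable def eVec {Γ : Type*} (γ : Γ) : lp (fun _ : Γ => ℝ) 1 :=
  letI := Classical.decEq Γ
  lp.single 1 γ (1 : ℝ)

/-!
Every `x ∈ ℓ¹(Γ)` is the norm-convergent sum `∑ x γ • e_γ`, so `T x = ∑ x γ • T e_γ`. Each column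
`T e_γ` vanishes at every `δ` outside the image of `F`, hence so does `T x`. Conversely, if `y`
vanishes off the image of `F`, pick for each `δ` in the image some `σ δ` with `F (σ δ) = some δ`;
the series `∑ y δ • e_{σ δ}` converges absolutely and `T` maps it to `∑ y δ • e_δ = y`.
The range is then an intersection of kernels of coordinate functionals, hence closed.
-/

open scoped lp

section

variable {Γ : Type*}

theorem norm_eVec (γ : Γ) : ‖eVec γ‖ = 1 := by
  simp [eVec, lp.norm_single]

theorem eVec_apply_of_ne {γ δ : Γ} (h : γ ≠ δ) : eVec γ δ = 0 := by
  classical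
  rw [eVec, lp.single_apply_ne 1 γ _ h.symm]

theorem hasSum_smul_eVec (x : ℓ¹(Γ, ℝ)) : HasSum (fun γ => x γ • eVec γ) x := by
  classical
  refine (lp.hasSum_single ENNReal.one_ne_top x).congr_fun fun γ => ?_
  rw [eVec, ← lp.single_smul, smul_eq_mul, mul_one]

theorem summable_norm_apply (x : ℓ¹(Γ, ℝ)) : Summable fun γ => ‖x γ‖ := by
  simpa using (lp.memℓp x).summable (p := 1) (by norm_num)

theorem isClosed_setOf_forall_apply_eq_zero (A : Set Γ) :
    IsClosed {y : ℓ¹(Γ, ℝ) | ∀ δ ∈ A, y δ = 0} := by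
  simp only [Set.ofPred_forall]
  exact isClosed_iInter fun δ => isClosed_iInter fun _ =>
    isClosed_eq (lp.evalCLM ℝ (fun _ : Γ => ℝ) 1 δ).continuous continuous_const

theorem hasSum_mul_map_eVec_apply (T : ℓ¹(Γ, ℝ) →L[ℝ] ℓ¹(Γ, ℝ)) (x : ℓ¹(Γ, ℝ)) (δ : Γ) :
    HasSum (fun γ => x γ * T (eVec γ) δ) (T x δ) := by
  have h := (lp.evalCLM ℝ (fun _ : Γ => ℝ) 1 δ).hasSum (T.hasSum (hasSum_smul_eVec x))
  simpa [lp.evalCLM] using h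

theorem map_apply_eq_zero_of_map_eVec_apply_eq_zero (T : ℓ¹(Γ, ℝ) →L[ℝ] ℓ¹(Γ, ℝ)) {δ : Γ}
    (h : ∀ γ, T (eVec γ) δ = 0) (x : ℓ¹(Γ, ℝ)) : T x δ = 0 :=
  (hasSum_mul_map_eVec_apply T x δ).unique (by simp [h, hasSum_zero])

theorem mem_range_of_support_subset (T : ℓ¹(Γ, ℝ) →L[ℝ] ℓ¹(Γ, ℝ)) {D : Set Γ}
    (σ : D → Γ) (hσ : ∀ δ : D, T (eVec (σ δ)) = eVec (δ : Γ)) (y : ℓ¹(Γ, ℝ))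
    (hy : Function.support y ⊆ D) : y ∈ Set.range T := by
  have hsummable : Summable fun δ : D => y δ • eVec (σ δ) := by
    refine .of_norm ((summable_norm_apply y).subtype D |>.congr fun δ => ?_)
    simp [norm_smul, norm_eVec]
  have hsupport : (Function.support fun δ => y δ • eVec δ) ⊆ D :=
    (Function.support_smul_subset_left _ _).trans hy
  refine ⟨∑' δ : D, y δ • eVec (σ δ), ?_⟩
  rw [T.map_tsum hsummable]
  simp only [map_smul, hσ]
  exact (tsum_subtype_eq_of_support_subset hsupport).trans (hasSum_smul_eVec y).tsum_eq

end

theorem stmt14 {Γ : Type*} (F : Γ → Option Γ)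
    (T : lp (fun _ : Γ => ℝ) 1 →L[ℝ] lp (fun _ : Γ => ℝ) 1)
    (hT_some : ∀ γ δ : Γ, F γ = some δ → T (eVec γ) = eVec δ)
    (hT_none : ∀ γ : Γ, F γ = none → T (eVec γ) = 0) :
    Set.range T = {y : lp (fun _ : Γ => ℝ) 1 | ∀ δ : Γ, (∀ γ : Γ, F γ ≠ some δ) → y δ = 0} ∧
    IsClosed (Set.range T) := by
  have hcolumn : ∀ δ, (∀ γ, F γ ≠ some δ) → ∀ γ, T (eVec γ) δ = 0 := by
    intro δ hδ γ
    rcases hF : F γ with _ | δ'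
    · simp [hT_none γ hF]
    · rw [hT_some γ δ' hF, eVec_apply_of_ne fun h => hδ γ (by rwa [h] at hF)]
  have hrange : Set.range T = {y | ∀ δ, (∀ γ, F γ ≠ some δ) → y δ = 0} := by
    refine Set.Subset.antisymm ?_ fun y hy => ?_
    · rintro _ ⟨x, rfl⟩ δ hδ
      exact map_apply_eq_zero_of_map_eVec_apply_eq_zero T (hcolumn δ hδ) x
    · choose σ hσ using fun δ : {δ | ∃ γ, F γ = some δ} => δ.2
      exact mem_range_of_support_subset T σ (fun δ => hT_some _ _ (hσ δ)) y
        fun δ hδ => by_contra fun hδD => hδ (hy δ fun γ hγ => hδD ⟨γ, hγ⟩)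
  exact ⟨hrange, hrange ▸ isClosed_setOf_forall_apply_eq_zero _⟩
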